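/- Setting x(r) = a(r)/c(r) and y(r) = b(r)/c(r), as r → 0⁺ one has the asymptotic expansions x(r) = (2/m)r − (1/m²)r² + O(r³) and y(r) = −1 + (1/m)r − (1/(2m²))r² + O(r³). -/

import Mathlib

open Topology Asymptotics Filter ContDiff

private lemma AH_step {G : ℝ → ℝ} (hd : Differentiable ℝ G) (h0 : G 0 = 0) {k : ℕ}
    (h : deriv G =O[𝓝 0] fun r => r ^ k) :
    G =O[𝓝 0] fun r => r ^ (k + 1) := by
  obtain ⟨c, hc0, hc⟩ := h.exists_nonneg
  rw [Asymptotics.isBigOWith_iff] at hc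
  rw [Asymptotics.isBigO_iff]
  refine ⟨c, ?_⟩
  rw [Metric.eventually_nhds_iff] at hc ⊢
  obtain ⟨ε, hε, hb⟩ := hc
  refine ⟨ε, hε, fun x hx => ?_⟩
  have hseg : ∀ t ∈ segment ℝ 0 x, ‖t‖ ≤ ‖x‖ := by
    intro t ht
    rw [segment_eq_uIcc] at ht
    rcases le_total 0 x with hx0 | hx0
    · rw [Set.uIcc_of_le hx0] at ht
      rw [Real.norm_eq_abs, Real.norm_eq_abs, abs_of_nonneg ht.1, abs_of_nonneg hx0]
      exact ht.2
    · rw [Set.uIcc_of_ge hx0] at ht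
      rw [Real.norm_eq_abs, Real.norm_eq_abs, abs_of_nonpos ht.2,
        abs_of_nonpos hx0]
      linarith [ht.1]
  have key : ‖G x - G 0‖ ≤ (c * ‖x‖ ^ k) * ‖x - 0‖ := by
    refine (convex_segment (0:ℝ) x).norm_image_sub_le_of_norm_hasDerivWithin_le
      (fun t ht => (hd t).hasDerivAt.hasDerivWithinAt) (fun t ht => ?_)
      (left_mem_segment ℝ 0 x) (right_mem_segment ℝ 0 x)
    have h1 : dist t 0 < ε := by
      simp only [dist_zero_right]
      exact lt_of_le_of_lt (hseg t ht) (by simpa using hx)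
    calc ‖deriv G t‖ ≤ c * ‖t ^ k‖ := hb h1
      _ ≤ c * ‖x‖ ^ k := by
          rw [norm_pow]
          exact mul_le_mul_of_nonneg_left (pow_le_pow_left₀ (norm_nonneg _) (hseg t ht) k) hc0
  simp only [h0, sub_zero] at key
  calc ‖G x‖ ≤ (c * ‖x‖ ^ k) * ‖x‖ := key
    _ = c * ‖x ^ (k+1)‖ := by rw [norm_pow]; ring

private lemma AH_taylor2 {F : ℝ → ℝ} (hF0 : ContDiff ℝ (⊤ : ℕ∞) F) :
    (fun r => F r - (F 0 + deriv F 0 * r + deriv (deriv F) 0 / 2 * r ^ 2)) =O[𝓝 0]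
      fun r => r ^ 3 := by
  have hF : ContDiff ℝ ∞ F := hF0.of_le (by simp)
  have hFd : Differentiable ℝ F := (contDiff_infty_iff_deriv.mp hF).1
  have hdF : ContDiff ℝ ∞ (deriv F) := (contDiff_infty_iff_deriv.mp hF).2
  have hdFd : Differentiable ℝ (deriv F) := (contDiff_infty_iff_deriv.mp hdF).1
  have hddF : ContDiff ℝ ∞ (deriv (deriv F)) := (contDiff_infty_iff_deriv.mp hdF).2
  have hddFd : Differentiable ℝ (deriv (deriv F)) := (contDiff_infty_iff_deriv.mp hddF).1
  set R : ℝ → ℝ := fun r => F r - (F 0 + deriv F 0 * r + deriv (deriv F) 0 / 2 * r ^ 2) with hR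
  have hpolH : ∀ r : ℝ, HasDerivAt
      (fun r : ℝ => F 0 + deriv F 0 * r + deriv (deriv F) 0 / 2 * r ^ 2)
      (deriv F 0 + deriv (deriv F) 0 * r) r := by
    intro r
    have h := (((hasDerivAt_id r).const_mul (deriv F 0)).const_add (F 0)).add
      ((hasDerivAt_pow 2 r).const_mul (deriv (deriv F) 0 / 2))
    exact h.congr_deriv (by push_cast; ring)
  have hRd : Differentiable ℝ R := fun r => ((hFd r).hasDerivAt.sub (hpolH r)).differentiableAt
  have hderivR : deriv R = fun r => deriv F r - (deriv F 0 + deriv (deriv F) 0 * r) := by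
    funext r
    exact ((hFd r).hasDerivAt.sub (hpolH r)).deriv
  have hpol2H : ∀ r : ℝ, HasDerivAt (fun r : ℝ => deriv F 0 + deriv (deriv F) 0 * r)
      (deriv (deriv F) 0) r := by
    intro r
    simpa using ((hasDerivAt_id r).const_mul (deriv (deriv F) 0)).const_add (deriv F 0)
  have hRd2 : Differentiable ℝ (deriv R) := by
    rw [hderivR]
    exact fun r => ((hdFd r).hasDerivAt.sub (hpol2H r)).differentiableAt
  have hderivR2 : deriv (deriv R) = fun r => deriv (deriv F) r - deriv (deriv F) 0 := by
    rw [hderivR]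
    funext r
    exact ((hdFd r).hasDerivAt.sub (hpol2H r)).deriv
  have h2 : deriv (deriv R) =O[𝓝 0] fun r => r ^ 1 := by
    rw [hderivR2]
    simpa using (hddFd 0).isBigO_sub
  have h1 : deriv R =O[𝓝 0] fun r => r ^ 2 := by
    refine AH_step hRd2 ?_ h2
    rw [hderivR]; simp
  refine AH_step hRd ?_ h1
  rw [hR]; simp

private lemma AH_slope {F : ℝ → ℝ} {d : ℝ} (h : HasDerivAt F d 0) (h0 : F 0 = 0) :
    Tendsto (fun r => F r / r) (𝓝[>] (0:ℝ)) (𝓝 d) := by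
  have h1 := hasDerivAt_iff_tendsto_slope.mp h
  have h2 : 𝓝[>] (0:ℝ) ≤ 𝓝[≠] (0:ℝ) := nhdsWithin_mono _ fun x hx => ne_of_gt hx
  refine (h1.mono_left h2).congr fun r => ?_
  simp [slope_def_field, h0]

private lemma AH_div_sq_tendsto {f : ℝ → ℝ} {d : ℝ}
    (h : (fun r => f r - d * r ^ 2) =O[𝓝 0] fun r : ℝ => r ^ 3) :
    Tendsto (fun r => f r / r ^ 2) (𝓝[>] (0:ℝ)) (𝓝 d) := by
  rw [← tendsto_sub_nhds_zero_iff]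
  have h2 : (fun r => f r / r ^ 2 - d) =O[𝓝[>] (0:ℝ)] fun r => r := by
    have h3 := (h.mono nhdsWithin_le_nhds).mul
      (isBigO_refl (fun r : ℝ => (r ^ 2)⁻¹) (𝓝[>] (0:ℝ)))
    refine h3.congr' ?_ ?_
    · filter_upwards [self_mem_nhdsWithin] with r (hr : 0 < r)
      have : r ≠ 0 := ne_of_gt hr
      field_simp
    · filter_upwards [self_mem_nhdsWithin] with r (hr : 0 < r)
      have : r ≠ 0 := ne_of_gt hr
      field_simp
  exact h2.trans_tendsto (tendsto_nhdsWithin_of_tendsto_nhds (continuous_id.tendsto 0))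

private lemma AH_r4 : (fun r : ℝ => r ^ 4) =O[𝓝 (0:ℝ)] fun r => r ^ 3 := by
  have h := (isBigO_refl (fun r : ℝ => r ^ 3) (𝓝 (0:ℝ))).mul
    ((continuous_id.tendsto (0:ℝ)).isBigO_one ℝ)
  refine h.congr (fun r => by simp only [id_eq]; ring) (fun r => by ring)

set_option maxHeartbeats 1000000 in
/-- Asymptotic expansions of `x = a/c` and `y = b/c` as `r → 0⁺`:
`x(r) = (2/m)r − (1/m²)r² + O(r³)` and `y(r) = −1 + (1/m)r − (1/(2m²))r² + O(r³)`. -/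
theorem atiyah_hitchin_ratio_expansions_at_zero
    (m : ℝ) (hm : 0 < m)
    (a b c : ℝ → ℝ)
    (hca : ContinuousOn a (Set.Ici 0))
    (hcb : ContinuousOn b (Set.Ici 0))
    (hcc : ContinuousOn c (Set.Ici 0))
    (hda : ∀ r > (0:ℝ),
      HasDerivAt a ((a r ^ 2 - (b r - c r) ^ 2) / (2 * b r * c r)) r)
    (hdb : ∀ r > (0:ℝ),
      HasDerivAt b ((b r ^ 2 - (c r - a r) ^ 2) / (2 * c r * a r)) r)
    (hdc : ∀ r > (0:ℝ),
      HasDerivAt c ((c r ^ 2 - (a r - b r) ^ 2) / (2 * a r * b r)) r)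
    (hia : a 0 = 0) (hib : b 0 = -m) (hic : c 0 = m)
    (hapos : ∀ r > (0:ℝ), 0 < a r)
    (hcpos : ∀ r > (0:ℝ), 0 < c r)
    (hbneg : ∀ r > (0:ℝ), b r < 0)
    (hsmooth : ∃ A B C : ℝ → ℝ, ContDiff ℝ (⊤ : ℕ∞) A ∧ ContDiff ℝ (⊤ : ℕ∞) B ∧ ContDiff ℝ (⊤ : ℕ∞) C ∧
      (∀ r ≥ (0:ℝ), a r = A r ∧ b r = B r ∧ c r = C r)) :
    ((fun r => a r / c r - (2 / m * r - 1 / m ^ 2 * r ^ 2)) =O[𝓝[>] 0]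
      fun r => r ^ 3) ∧
    ((fun r => b r / c r - (-1 + 1 / m * r - 1 / (2 * m ^ 2) * r ^ 2)) =O[𝓝[>] 0]
      fun r => r ^ 3) := by
  obtain ⟨A, B, C, hA, hB, hC, hagree⟩ := hsmooth
  have hm0 : m ≠ 0 := ne_of_gt hm
  -- basic values
  have hA0 : A 0 = 0 := by rw [← (hagree 0 le_rfl).1, hia]
  have hB0 : B 0 = -m := by rw [← (hagree 0 le_rfl).2.1, hib]
  have hC0 : C 0 = m := by rw [← (hagree 0 le_rfl).2.2, hic]
  -- differentiability data
  have hA' : ContDiff ℝ ∞ A := hA.of_le (by simp)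
  have hB' : ContDiff ℝ ∞ B := hB.of_le (by simp)
  have hC' : ContDiff ℝ ∞ C := hC.of_le (by simp)
  have hAd : Differentiable ℝ A := (contDiff_infty_iff_deriv.mp hA').1
  have hBd : Differentiable ℝ B := (contDiff_infty_iff_deriv.mp hB').1
  have hCd : Differentiable ℝ C := (contDiff_infty_iff_deriv.mp hC').1
  have hdA : ContDiff ℝ ∞ (deriv A) := (contDiff_infty_iff_deriv.mp hA').2
  have hdB : ContDiff ℝ ∞ (deriv B) := (contDiff_infty_iff_deriv.mp hB').2
  have hdC : ContDiff ℝ ∞ (deriv C) := (contDiff_infty_iff_deriv.mp hC').2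
  have hdAd : Differentiable ℝ (deriv A) := (contDiff_infty_iff_deriv.mp hdA).1
  have hdBd : Differentiable ℝ (deriv B) := (contDiff_infty_iff_deriv.mp hdB).1
  have hdCd : Differentiable ℝ (deriv C) := (contDiff_infty_iff_deriv.mp hdC).1
  -- positivity transferred
  have hApos : ∀ r > (0:ℝ), 0 < A r := fun r hr => (hagree r hr.le).1 ▸ hapos r hr
  have hCpos : ∀ r > (0:ℝ), 0 < C r := fun r hr => (hagree r hr.le).2.2 ▸ hcpos r hr
  have hBneg : ∀ r > (0:ℝ), B r < 0 := fun r hr => (hagree r hr.le).2.1 ▸ hbneg r hr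
  -- eventually facts
  have hev : ∀ᶠ r in 𝓝[>] (0:ℝ), 0 < r := self_mem_nhdsWithin
  -- transfer of the ODE to A B C
  have heqnhds : ∀ r > (0:ℝ), (a =ᶠ[𝓝 r] A) ∧ (b =ᶠ[𝓝 r] B) ∧ (c =ᶠ[𝓝 r] C) := by
    intro r hr
    have hIci : Set.Ici (0:ℝ) ∈ 𝓝 r := mem_of_superset (Ioi_mem_nhds hr) Set.Ioi_subset_Ici_self
    refine ⟨?_, ?_, ?_⟩ <;>
      · filter_upwards [hIci] with t ht
        first
          | exact (hagree t ht).1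
          | exact (hagree t ht).2.1
          | exact (hagree t ht).2.2
  have hdAr : ∀ r > (0:ℝ), deriv A r = (A r ^ 2 - (B r - C r) ^ 2) / (2 * B r * C r) := by
    intro r hr
    have h := (hda r hr).congr_of_eventuallyEq (heqnhds r hr).1.symm
    rw [(hagree r hr.le).1, (hagree r hr.le).2.1, (hagree r hr.le).2.2] at h
    exact h.deriv
  have hdBr : ∀ r > (0:ℝ), deriv B r = (B r ^ 2 - (C r - A r) ^ 2) / (2 * C r * A r) := by
    intro r hr
    have h := (hdb r hr).congr_of_eventuallyEq (heqnhds r hr).2.1.symm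
    rw [(hagree r hr.le).1, (hagree r hr.le).2.1, (hagree r hr.le).2.2] at h
    exact h.deriv
  have hdCr : ∀ r > (0:ℝ), deriv C r = (C r ^ 2 - (A r - B r) ^ 2) / (2 * A r * B r) := by
    intro r hr
    have h := (hdc r hr).congr_of_eventuallyEq (heqnhds r hr).2.2.symm
    rw [(hagree r hr.le).1, (hagree r hr.le).2.1, (hagree r hr.le).2.2] at h
    exact h.deriv
  -- tendsto of A B C at 0 from the right
  have tA : Tendsto A (𝓝[>] (0:ℝ)) (𝓝 0) := by
    have := (hA.continuous.tendsto 0).mono_left (nhdsWithin_le_nhds (s := Set.Ioi (0:ℝ)))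
    rwa [hA0] at this
  have tB : Tendsto B (𝓝[>] (0:ℝ)) (𝓝 (-m)) := by
    have := (hB.continuous.tendsto 0).mono_left (nhdsWithin_le_nhds (s := Set.Ioi (0:ℝ)))
    rwa [hB0] at this
  have tC : Tendsto C (𝓝[>] (0:ℝ)) (𝓝 m) := by
    have := (hC.continuous.tendsto 0).mono_left (nhdsWithin_le_nhds (s := Set.Ioi (0:ℝ)))
    rwa [hC0] at this
  have tdA : Tendsto (deriv A) (𝓝[>] (0:ℝ)) (𝓝 (deriv A 0)) :=
    (hdA.continuous.tendsto 0).mono_left nhdsWithin_le_nhds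
  have tdB : Tendsto (deriv B) (𝓝[>] (0:ℝ)) (𝓝 (deriv B 0)) :=
    (hdB.continuous.tendsto 0).mono_left nhdsWithin_le_nhds
  have tdC : Tendsto (deriv C) (𝓝[>] (0:ℝ)) (𝓝 (deriv C 0)) :=
    (hdC.continuous.tendsto 0).mono_left nhdsWithin_le_nhds
  -- Step 1 : deriv A 0 = 2
  have hα : deriv A 0 = 2 := by
    have h2 : Tendsto (fun r => (A r ^ 2 - (B r - C r) ^ 2) / (2 * B r * C r))
        (𝓝[>] (0:ℝ)) (𝓝 (((0:ℝ) ^ 2 - (-m - m) ^ 2) / (2 * -m * m))) := by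
      refine Tendsto.div ((tA.pow 2).sub ((tB.sub tC).pow 2))
        (((tendsto_const_nhds.mul tB).mul tC)) ?_
      intro h
      rw [mul_comm] at h
      nlinarith [sq_nonneg m]
    have h2' : Tendsto (fun r => (A r ^ 2 - (B r - C r) ^ 2) / (2 * B r * C r))
        (𝓝[>] (0:ℝ)) (𝓝 2) := by
      convert h2 using 2
      field_simp
      ring
    have h3 : Tendsto (deriv A) (𝓝[>] (0:ℝ)) (𝓝 2) := by
      refine h2'.congr' ?_
      filter_upwards [hev] with r hr
      exact (hdAr r hr).symm
    exact tendsto_nhds_unique tdA h3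
  -- slope of A
  have hAslope : Tendsto (fun r => A r / r) (𝓝[>] (0:ℝ)) (𝓝 2) := by
    have := AH_slope ((hAd 0).hasDerivAt) hA0
    rwa [hα] at this
  -- Step 2 : deriv B 0 = 1/2 and deriv C 0 = 1/2
  have huH : HasDerivAt (fun r => B r + C r - A r) (deriv B 0 + deriv C 0 - 2) 0 := by
    have := ((hBd 0).hasDerivAt.add (hCd 0).hasDerivAt).sub (hAd 0).hasDerivAt
    rwa [hα] at this
  have hu0 : B 0 + C 0 - A 0 = 0 := by rw [hA0, hB0, hC0]; ring
  have huslope : Tendsto (fun r => (B r + C r - A r) / r) (𝓝[>] (0:ℝ))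
      (𝓝 (deriv B 0 + deriv C 0 - 2)) := AH_slope huH hu0
  have hβeq : deriv B 0 = (-m - m + 0) * (deriv B 0 + deriv C 0 - 2) / (2 * m * 2) := by
    have hlim : Tendsto (fun r => (B r - C r + A r) * ((B r + C r - A r) / r) /
        (2 * C r * (A r / r))) (𝓝[>] (0:ℝ))
        (𝓝 ((-m - m + 0) * (deriv B 0 + deriv C 0 - 2) / (2 * m * 2))) := by
      refine Tendsto.div (((tB.sub tC).add tA).mul huslope)
        ((tendsto_const_nhds.mul tC).mul hAslope) ?_
      intro h
      nlinarith
    have heq : ∀ᶠ r in 𝓝[>] (0:ℝ), deriv B r =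
        (B r - C r + A r) * ((B r + C r - A r) / r) / (2 * C r * (A r / r)) := by
      filter_upwards [hev] with r hr
      have hr0 : r ≠ 0 := ne_of_gt hr
      have hCr : C r ≠ 0 := ne_of_gt (hCpos r hr)
      have hAr : A r ≠ 0 := ne_of_gt (hApos r hr)
      rw [hdBr r hr]
      field_simp
      ring
    exact tendsto_nhds_unique (tdB.congr' heq) hlim
  have hγeq : deriv C 0 = (deriv B 0 + deriv C 0 - 2) * (m + 0 - -m) / (2 * -m * 2) := by
    have hlim : Tendsto (fun r => ((B r + C r - A r) / r) * (C r + A r - B r) /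
        (2 * B r * (A r / r))) (𝓝[>] (0:ℝ))
        (𝓝 ((deriv B 0 + deriv C 0 - 2) * (m + 0 - -m) / (2 * -m * 2))) := by
      refine Tendsto.div (huslope.mul ((tC.add tA).sub tB))
        ((tendsto_const_nhds.mul tB).mul hAslope) ?_
      intro h
      nlinarith
    have heq : ∀ᶠ r in 𝓝[>] (0:ℝ), deriv C r =
        ((B r + C r - A r) / r) * (C r + A r - B r) / (2 * B r * (A r / r)) := by
      filter_upwards [hev] with r hr
      have hr0 : r ≠ 0 := ne_of_gt hr
      have hBC : B r ≠ 0 := ne_of_lt (hBneg r hr)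
      have hAA : A r ≠ 0 := ne_of_gt (hApos r hr)
      rw [hdCr r hr]
      field_simp
      ring
    exact tendsto_nhds_unique (tdC.congr' heq) hlim
  have h4m : (2 * m * 2 : ℝ) ≠ 0 := by positivity
  have h4m' : (2 * -m * 2 : ℝ) ≠ 0 := by intro h; apply hm0; linarith
  have hβγ : deriv B 0 = 1/2 ∧ deriv C 0 = 1/2 := by
    have h1 := (eq_div_iff h4m).mp hβeq
    have h2 := (eq_div_iff h4m').mp hγeq
    have h3 : m * (deriv B 0 - deriv C 0) = 0 := by linear_combination (h1 + h2) / 4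
    have h4 : deriv B 0 = deriv C 0 := by
      rcases mul_eq_zero.mp h3 with h | h
      · exact absurd h hm0
      · linarith
    have h5 : m * (2 * deriv B 0 - 1) = 0 := by linear_combination h1 / 4 + (m / 2) * h4
    have h6 : deriv B 0 = 1/2 := by
      rcases mul_eq_zero.mp h5 with h | h
      · exact absurd h hm0
      · linarith
    exact ⟨h6, by rw [← h4, h6]⟩
  have hβ : deriv B 0 = 1/2 := hβγ.1
  have hγ : deriv C 0 = 1/2 := hβγ.2
  -- Step 3 : deriv (deriv A) 0 = 0
  have hVH : HasDerivAt (fun r => A r + B r + C r) (3 : ℝ) 0 := by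
    have := ((hAd 0).hasDerivAt.add (hBd 0).hasDerivAt).add (hCd 0).hasDerivAt
    rw [hα, hβ, hγ] at this
    exact this.congr_deriv (by norm_num)
  have hV0 : A 0 + B 0 + C 0 = 0 := by rw [hA0, hB0, hC0]; ring
  have hVslope : Tendsto (fun r => (A r + B r + C r) / r) (𝓝[>] (0:ℝ)) (𝓝 3) :=
    AH_slope hVH hV0
  have hα₂ : deriv (deriv A) 0 = 0 := by
    have hslope : Tendsto (fun r => (deriv A r - deriv A 0) / r) (𝓝[>] (0:ℝ))
        (𝓝 (deriv (deriv A) 0)) := by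
      have h := AH_slope (F := fun r => deriv A r - deriv A 0)
        (((hdAd 0).hasDerivAt).sub_const (deriv A 0)) (by ring)
      exact h
    have hlim : Tendsto (fun r => (A r - B r - C r) * ((A r + B r + C r) / r) /
        (2 * B r * C r)) (𝓝[>] (0:ℝ))
        (𝓝 ((0 - -m - m) * 3 / (2 * -m * m))) := by
      refine Tendsto.div (((tA.sub tB).sub tC).mul hVslope)
        ((tendsto_const_nhds.mul tB).mul tC) ?_
      intro h
      rw [mul_comm] at h
      nlinarith [sq_nonneg m]
    have hlim' : Tendsto (fun r => (A r - B r - C r) * ((A r + B r + C r) / r) /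
        (2 * B r * C r)) (𝓝[>] (0:ℝ)) (𝓝 0) := by
      convert hlim using 2
      field_simp
      ring
    have heq : ∀ᶠ r in 𝓝[>] (0:ℝ), (deriv A r - deriv A 0) / r =
        (A r - B r - C r) * ((A r + B r + C r) / r) / (2 * B r * C r) := by
      filter_upwards [hev] with r hr
      have hr0 : r ≠ 0 := ne_of_gt hr
      have hBr : B r ≠ 0 := ne_of_lt (hBneg r hr)
      have hCr : C r ≠ 0 := ne_of_gt (hCpos r hr)
      rw [hdAr r hr, hα]
      field_simp
      ring
    exact tendsto_nhds_unique hslope (hlim'.congr' (heq.mono fun r h => h.symm))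
  -- Step 4 : second derivatives of B and C at 0
  set β₂ := deriv (deriv B) 0 with hβ₂def
  set γ₂ := deriv (deriv C) 0 with hγ₂def
  -- the function N for B
  set N : ℝ → ℝ := fun r => (B r - C r + A r) * (B r + C r - A r) - C r * A r with hNdef
  have hNsmooth : ContDiff ℝ (⊤ : ℕ∞) N := (((hB.sub hC).add hA).mul ((hB.add hC).sub hA)).sub
    (hC.mul hA)
  have hNH : ∀ r, HasDerivAt N
      ((deriv B r - deriv C r + deriv A r) * (B r + C r - A r) +
        (B r - C r + A r) * (deriv B r + deriv C r - deriv A r) -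
        (deriv C r * A r + C r * deriv A r)) r := by
    intro r
    exact ((((hBd r).hasDerivAt.sub (hCd r).hasDerivAt).add (hAd r).hasDerivAt).mul
      (((hBd r).hasDerivAt.add (hCd r).hasDerivAt).sub (hAd r).hasDerivAt)).sub
      ((hCd r).hasDerivAt.mul (hAd r).hasDerivAt)
  have hNderiv : deriv N = fun r =>
      (deriv B r - deriv C r + deriv A r) * (B r + C r - A r) +
        (B r - C r + A r) * (deriv B r + deriv C r - deriv A r) -
        (deriv C r * A r + C r * deriv A r) := funext fun r => (hNH r).deriv
  have hN0 : N 0 = 0 := by simp only [hNdef]; rw [hA0, hB0, hC0]; ring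
  have hdN0 : deriv N 0 = 0 := by
    rw [hNderiv]
    simp only
    rw [hA0, hB0, hC0, hα, hβ, hγ]
    ring
  have hddN0 : deriv (deriv N) 0 = -6 - 2 * m * (β₂ + γ₂) := by
    have hH : HasDerivAt (deriv N)
        (((deriv (deriv B) 0 - deriv (deriv C) 0 + deriv (deriv A) 0) * (B 0 + C 0 - A 0) +
          (deriv B 0 - deriv C 0 + deriv A 0) * (deriv B 0 + deriv C 0 - deriv A 0)) +
         ((deriv B 0 - deriv C 0 + deriv A 0) * (deriv B 0 + deriv C 0 - deriv A 0) +
          (B 0 - C 0 + A 0) * (deriv (deriv B) 0 + deriv (deriv C) 0 - deriv (deriv A) 0)) -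
         ((deriv (deriv C) 0 * A 0 + deriv C 0 * deriv A 0) +
          (deriv C 0 * deriv A 0 + C 0 * deriv (deriv A) 0))) 0 := by
      rw [hNderiv]
      exact (((((hdBd 0).hasDerivAt.sub (hdCd 0).hasDerivAt).add (hdAd 0).hasDerivAt).mul
          (((hBd 0).hasDerivAt.add (hCd 0).hasDerivAt).sub (hAd 0).hasDerivAt)).add
        ((((hBd 0).hasDerivAt.sub (hCd 0).hasDerivAt).add (hAd 0).hasDerivAt).mul
          (((hdBd 0).hasDerivAt.add (hdCd 0).hasDerivAt).sub (hdAd 0).hasDerivAt))).sub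
        (((hdCd 0).hasDerivAt.mul (hAd 0).hasDerivAt).add
          ((hCd 0).hasDerivAt.mul (hdAd 0).hasDerivAt))
    have := hH.deriv
    rw [this, hA0, hB0, hC0, hα, hβ, hγ, hα₂, ← hβ₂def, ← hγ₂def]
    ring
  have hNlim : Tendsto (fun r => N r / r ^ 2) (𝓝[>] (0:ℝ))
      (𝓝 ((-6 - 2 * m * (β₂ + γ₂)) / 2)) := by
    refine AH_div_sq_tendsto ?_
    have h := AH_taylor2 hNsmooth
    rw [hN0, hdN0, hddN0] at h
    refine h.congr_left fun r => ?_
    ring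
  have hβ₂eq : β₂ = ((-6 - 2 * m * (β₂ + γ₂)) / 2) / (2 * m * 2) := by
    have hslope : Tendsto (fun r => (deriv B r - deriv B 0) / r) (𝓝[>] (0:ℝ)) (𝓝 β₂) :=
      AH_slope (F := fun r => deriv B r - deriv B 0)
        (((hdBd 0).hasDerivAt).sub_const (deriv B 0)) (by ring)
    have hlim : Tendsto (fun r => (N r / r ^ 2) / (2 * C r * (A r / r))) (𝓝[>] (0:ℝ))
        (𝓝 (((-6 - 2 * m * (β₂ + γ₂)) / 2) / (2 * m * 2))) := by
      refine Tendsto.div hNlim ((tendsto_const_nhds.mul tC).mul hAslope) ?_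
      intro h
      nlinarith
    have heq : ∀ᶠ r in 𝓝[>] (0:ℝ), (deriv B r - deriv B 0) / r =
        (N r / r ^ 2) / (2 * C r * (A r / r)) := by
      filter_upwards [hev] with r hr
      have hr0 : r ≠ 0 := ne_of_gt hr
      have hCr : C r ≠ 0 := ne_of_gt (hCpos r hr)
      have hAr : A r ≠ 0 := ne_of_gt (hApos r hr)
      rw [hdBr r hr, hβ, hNdef]
      field_simp
      ring
    exact tendsto_nhds_unique (hslope.congr' heq) hlim
  -- the function M for C
  set M : ℝ → ℝ := fun r => (B r + C r - A r) * (C r + A r - B r) - A r * B r with hMdef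
  have hMsmooth : ContDiff ℝ (⊤ : ℕ∞) M := (((hB.add hC).sub hA).mul ((hC.add hA).sub hB)).sub
    (hA.mul hB)
  have hMH : ∀ r, HasDerivAt M
      ((deriv B r + deriv C r - deriv A r) * (C r + A r - B r) +
        (B r + C r - A r) * (deriv C r + deriv A r - deriv B r) -
        (deriv A r * B r + A r * deriv B r)) r := by
    intro r
    exact ((((hBd r).hasDerivAt.add (hCd r).hasDerivAt).sub (hAd r).hasDerivAt).mul
      (((hCd r).hasDerivAt.add (hAd r).hasDerivAt).sub (hBd r).hasDerivAt)).sub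
      ((hAd r).hasDerivAt.mul (hBd r).hasDerivAt)
  have hMderiv : deriv M = fun r =>
      (deriv B r + deriv C r - deriv A r) * (C r + A r - B r) +
        (B r + C r - A r) * (deriv C r + deriv A r - deriv B r) -
        (deriv A r * B r + A r * deriv B r) := funext fun r => (hMH r).deriv
  have hM0 : M 0 = 0 := by simp only [hMdef]; rw [hA0, hB0, hC0]; ring
  have hdM0 : deriv M 0 = 0 := by
    rw [hMderiv]
    simp only
    rw [hA0, hB0, hC0, hα, hβ, hγ]
    ring
  have hddM0 : deriv (deriv M) 0 = 2 * m * (β₂ + γ₂) - 6 := by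
    have hH : HasDerivAt (deriv M)
        (((deriv (deriv B) 0 + deriv (deriv C) 0 - deriv (deriv A) 0) * (C 0 + A 0 - B 0) +
          (deriv B 0 + deriv C 0 - deriv A 0) * (deriv C 0 + deriv A 0 - deriv B 0)) +
         ((deriv B 0 + deriv C 0 - deriv A 0) * (deriv C 0 + deriv A 0 - deriv B 0) +
          (B 0 + C 0 - A 0) * (deriv (deriv C) 0 + deriv (deriv A) 0 - deriv (deriv B) 0)) -
         ((deriv (deriv A) 0 * B 0 + deriv A 0 * deriv B 0) +
          (deriv A 0 * deriv B 0 + A 0 * deriv (deriv B) 0))) 0 := by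
      rw [hMderiv]
      exact (((((hdBd 0).hasDerivAt.add (hdCd 0).hasDerivAt).sub (hdAd 0).hasDerivAt).mul
          (((hCd 0).hasDerivAt.add (hAd 0).hasDerivAt).sub (hBd 0).hasDerivAt)).add
        ((((hBd 0).hasDerivAt.add (hCd 0).hasDerivAt).sub (hAd 0).hasDerivAt).mul
          (((hdCd 0).hasDerivAt.add (hdAd 0).hasDerivAt).sub (hdBd 0).hasDerivAt))).sub
        (((hdAd 0).hasDerivAt.mul (hBd 0).hasDerivAt).add
          ((hAd 0).hasDerivAt.mul (hdBd 0).hasDerivAt))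
    have := hH.deriv
    rw [this, hA0, hB0, hC0, hα, hβ, hγ, hα₂, ← hβ₂def, ← hγ₂def]
    ring
  have hMlim : Tendsto (fun r => M r / r ^ 2) (𝓝[>] (0:ℝ))
      (𝓝 ((2 * m * (β₂ + γ₂) - 6) / 2)) := by
    refine AH_div_sq_tendsto ?_
    have h := AH_taylor2 hMsmooth
    rw [hM0, hdM0, hddM0] at h
    refine h.congr_left fun r => ?_
    ring
  have hγ₂eq : γ₂ = ((2 * m * (β₂ + γ₂) - 6) / 2) / (2 * -m * 2) := by
    have hslope : Tendsto (fun r => (deriv C r - deriv C 0) / r) (𝓝[>] (0:ℝ)) (𝓝 γ₂) :=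
      AH_slope (F := fun r => deriv C r - deriv C 0)
        (((hdCd 0).hasDerivAt).sub_const (deriv C 0)) (by ring)
    have hlim : Tendsto (fun r => (M r / r ^ 2) / (2 * B r * (A r / r))) (𝓝[>] (0:ℝ))
        (𝓝 (((2 * m * (β₂ + γ₂) - 6) / 2) / (2 * -m * 2))) := by
      refine Tendsto.div hMlim ((tendsto_const_nhds.mul tB).mul hAslope) ?_
      intro h
      nlinarith
    have heq : ∀ᶠ r in 𝓝[>] (0:ℝ), (deriv C r - deriv C 0) / r =
        (M r / r ^ 2) / (2 * B r * (A r / r)) := by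
      filter_upwards [hev] with r hr
      have hr0 : r ≠ 0 := ne_of_gt hr
      have hBr : B r ≠ 0 := ne_of_lt (hBneg r hr)
      have hAr : A r ≠ 0 := ne_of_gt (hApos r hr)
      rw [hdCr r hr, hγ, hMdef]
      field_simp
      ring
    exact tendsto_nhds_unique (hslope.congr' heq) hlim
  have hβ₂γ₂ : β₂ = -3 / (4 * m) ∧ γ₂ = 3 / (4 * m) := by
    have h1 := (eq_div_iff h4m).mp hβ₂eq
    have h2 := (eq_div_iff h4m').mp hγ₂eq
    have hσ : m * (β₂ + γ₂) = 0 := by linear_combination (h1 - h2) / 6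
    have hσ0 : β₂ + γ₂ = 0 := by
      rcases mul_eq_zero.mp hσ with h | h
      · exact absurd h hm0
      · exact h
    rw [hσ0] at h1 h2
    constructor
    · rw [eq_div_iff (by positivity : (4 * m : ℝ) ≠ 0)]
      linear_combination h1
    · rw [eq_div_iff (by positivity : (4 * m : ℝ) ≠ 0)]
      linear_combination -h2
  have hβ₂val : β₂ = -3 / (4 * m) := hβ₂γ₂.1
  have hγ₂val : γ₂ = 3 / (4 * m) := hβ₂γ₂.2
  -- Step 5 : Taylor expansions with O(r^3) remainders
  have hAT : (fun r => A r - 2 * r) =O[𝓝 (0:ℝ)] fun r => r ^ 3 := by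
    have h := AH_taylor2 hA
    rw [hA0, hα, hα₂] at h
    refine h.congr_left fun r => ?_
    ring
  have hBT : (fun r => B r - (-m + (1/2) * r - 3 / (8 * m) * r ^ 2)) =O[𝓝 (0:ℝ)]
      fun r => r ^ 3 := by
    have h := AH_taylor2 hB
    rw [hB0, hβ, ← hβ₂def, hβ₂val] at h
    refine h.congr_left fun r => ?_
    field_simp
    ring
  have hCT : (fun r => C r - (m + (1/2) * r + 3 / (8 * m) * r ^ 2)) =O[𝓝 (0:ℝ)]
      fun r => r ^ 3 := by
    have h := AH_taylor2 hC
    rw [hC0, hγ, ← hγ₂def, hγ₂val] at h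
    refine h.congr_left fun r => ?_
    field_simp
    ring
  -- Step 6 : assemble
  set P : ℝ → ℝ := fun r => 2 / m * r - 1 / m ^ 2 * r ^ 2 with hPdef
  set Q : ℝ → ℝ := fun r => -1 + 1 / m * r - 1 / (2 * m ^ 2) * r ^ 2 with hQdef
  have hPO : P =O[𝓝 (0:ℝ)] fun _ => (1:ℝ) := by
    have : Tendsto P (𝓝 (0:ℝ)) (𝓝 (P 0)) := by
      apply Continuous.tendsto
      rw [hPdef]
      fun_prop
    exact this.isBigO_one ℝ
  have hQO : Q =O[𝓝 (0:ℝ)] fun _ => (1:ℝ) := by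
    have : Tendsto Q (𝓝 (0:ℝ)) (𝓝 (Q 0)) := by
      apply Continuous.tendsto
      rw [hQdef]
      fun_prop
    exact this.isBigO_one ℝ
  have hpoly1 : (fun r : ℝ => 2 * r - P r * (m + (1/2) * r + 3 / (8 * m) * r ^ 2))
      =O[𝓝 (0:ℝ)] fun r => r ^ 3 := by
    have hID : (fun r : ℝ => 2 * r - P r * (m + (1/2) * r + 3 / (8 * m) * r ^ 2)) =
        fun r : ℝ => (-1 / (4 * m ^ 2)) * r ^ 3 + (3 / (8 * m ^ 3)) * r ^ 4 := by
      funext r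
      rw [hPdef]
      field_simp
      ring
    rw [hID]
    exact ((isBigO_refl (fun r : ℝ => r ^ 3) _).const_mul_left _).add
      (AH_r4.const_mul_left _)
  have hpoly2 : (fun r : ℝ => (-m + (1/2) * r - 3 / (8 * m) * r ^ 2) -
      Q r * (m + (1/2) * r + 3 / (8 * m) * r ^ 2)) =O[𝓝 (0:ℝ)] fun r => r ^ 3 := by
    have hID : (fun r : ℝ => (-m + (1/2) * r - 3 / (8 * m) * r ^ 2) -
        Q r * (m + (1/2) * r + 3 / (8 * m) * r ^ 2)) =
        fun r : ℝ => (-1 / (8 * m ^ 2)) * r ^ 3 + (3 / (16 * m ^ 3)) * r ^ 4 := by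
      funext r
      rw [hQdef]
      field_simp
      ring
    rw [hID]
    exact ((isBigO_refl (fun r : ℝ => r ^ 3) _).const_mul_left _).add
      (AH_r4.const_mul_left _)
  have hE1 : (fun r => A r - P r * C r) =O[𝓝 (0:ℝ)] fun r => r ^ 3 := by
    have hID : (fun r => A r - P r * C r) = fun r =>
        (A r - 2 * r) - P r * (C r - (m + (1/2) * r + 3 / (8 * m) * r ^ 2)) +
          (2 * r - P r * (m + (1/2) * r + 3 / (8 * m) * r ^ 2)) := by
      funext r
      ring
    rw [hID]
    refine (hAT.sub ?_).add hpoly1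
    have h := hPO.mul hCT
    refine h.congr_right fun r => ?_
    simp
  have hE2 : (fun r => B r - Q r * C r) =O[𝓝 (0:ℝ)] fun r => r ^ 3 := by
    have hID : (fun r => B r - Q r * C r) = fun r =>
        (B r - (-m + (1/2) * r - 3 / (8 * m) * r ^ 2)) -
          Q r * (C r - (m + (1/2) * r + 3 / (8 * m) * r ^ 2)) +
          ((-m + (1/2) * r - 3 / (8 * m) * r ^ 2) -
            Q r * (m + (1/2) * r + 3 / (8 * m) * r ^ 2)) := by
      funext r
      ring
    rw [hID]
    refine (hBT.sub ?_).add hpoly2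
    have h := hQO.mul hCT
    refine h.congr_right fun r => ?_
    simp
  have hCinv : (fun r => (C r)⁻¹) =O[𝓝[>] (0:ℝ)] fun _ => (1:ℝ) :=
    (tC.inv₀ hm0).isBigO_one ℝ
  constructor
  · have hmain : (fun r => A r / C r - P r) =O[𝓝[>] (0:ℝ)] fun r => r ^ 3 := by
      have h := ((hE1.mono nhdsWithin_le_nhds).mul hCinv)
      refine h.congr' ?_ ?_
      · filter_upwards [hev] with r hr
        have hCr : C r ≠ 0 := ne_of_gt (hCpos r hr)
        field_simp
      · filter_upwards with r
        simp
    refine hmain.congr' ?_ EventuallyEq.rfl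
    filter_upwards [hev] with r hr
    rw [(hagree r hr.le).1, (hagree r hr.le).2.2, hPdef]
  · have hmain : (fun r => B r / C r - Q r) =O[𝓝[>] (0:ℝ)] fun r => r ^ 3 := by
      have h := ((hE2.mono nhdsWithin_le_nhds).mul hCinv)
      refine h.congr' ?_ ?_
      · filter_upwards [hev] with r hr
        have hCr : C r ≠ 0 := ne_of_gt (hCpos r hr)
        field_simp
      · filter_upwards with r
        simp
    refine hmain.congr' ?_ EventuallyEq.rfl
    filter_upwards [hev] with r hr
    rw [(hagree r hr.le).2.1, (hagree r hr.le).2.2, hQdef]
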